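/- Fix a type V (rule variables), natural numbers m, p, q, a family α : Fin q → Type (element types of the q input tensors), rank data h : Fin q → ℕ and access counts n : Fin q → ℕ, axis embeddings emb : ∀ s : Fin q, Fin (h s) → Fin p, index transformers e : ∀ (s : Fin q), Fin (n s) → Fin (h s) → (V → ℤ) → ℤ, condition predicates g : Fin m → Fin p → (V → ℤ) → Prop, a scalar function scalarf : (∀ s : Fin q, Fin (n s) → α s) → (Fin m → Prop) → Prop, and a restriction-monotone family of precondition predicates Pre : ∀ i : ℕ, ((Fin p → Fin i → V → ℤ) → Prop). For a rank i, define valid i := ∀ (X : ∀ s : Fin q, (Fin (h s) → Fin i → ℤ) → α s) (v : Fin p → Fin i → (V → ℤ)), Pre i v → scalarf (fun s r => X s (fun t j => e s r t (v (emb s t) j))) (fun l => ∀ (t : Fin p) (j : Fin i), g l t (v t j)). Then for every k with max (m + ∑ s : Fin q, (n s).choose 2) 1 ≤ k, valid k implies valid (k + 1). -/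
import Mathlib


/-- Validity at rank `i` of a rewrite rule with `q` input tensors (tensor `s` has
element type `α s`, is indexed by `h s` of the `p` same-rank-class aggregated-axes via
the embedding `emb s`, and is accessed `n s` times), and `m` conditions. -/
def Valid {V : Type*} (m p q : ℕ) (α : Fin q → Type*)
    (h : Fin q → ℕ) (n : Fin q → ℕ)
    (emb : ∀ s : Fin q, Fin (h s) → Fin p)
    (e : ∀ s : Fin q, Fin (n s) → Fin (h s) → (V → ℤ) → ℤ)
    (g : Fin m → Fin p → (V → ℤ) → Prop)
    (scalarf : (∀ s : Fin q, Fin (n s) → α s) → (Fin m → Prop) → Prop)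
    (Pre : ∀ i : ℕ, (Fin p → Fin i → V → ℤ) → Prop)
    (i : ℕ) : Prop :=
  ∀ (X : ∀ s : Fin q, (Fin (h s) → Fin i → ℤ) → α s) (v : Fin p → Fin i → V → ℤ),
    Pre i v →
      scalarf (fun s r => X s (fun t j => e s r t (v (emb s t) j)))
        (fun l => ∀ (t : Fin p) (j : Fin i), g l t (v t j))

/-- Auxiliary: type of (tensor, unordered pair of accesses) data. -/
abbrev PairT (q : ℕ) (n : Fin q → ℕ) : Type :=
  Σ s : Fin q, {A : Finset (Fin (n s)) // A.card = 2}

/-- Auxiliary: column `d` is the unique difference column of the pair `x`. -/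
def BadPair {q kk : ℕ} (n : Fin q → ℕ) (h : Fin q → ℕ)
    (M : ∀ s : Fin q, Fin (n s) → Fin (h s) → Fin kk → ℤ)
    (d : Fin kk) (x : PairT q n) : Prop :=
  (∃ r ∈ x.2.1, ∃ r' ∈ x.2.1, M x.1 r ≠ M x.1 r') ∧
    ∀ r ∈ x.2.1, ∀ r' ∈ x.2.1, ∀ t (j : Fin kk), j ≠ d → M x.1 r t j = M x.1 r' t j

/-- Sufficient-rank lemma underlying the `InferBound` algorithm, for an arbitrary
number of input tensors: the bound is the number of conditions involving the rank class
plus, for each tensor containing an axis of the class, the number of unordered pairs of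
its accesses. -/
theorem sufficient_rank_many_tensors {V : Type*} (m p q : ℕ) (α : Fin q → Type*)
    (h : Fin q → ℕ) (n : Fin q → ℕ)
    (emb : ∀ s : Fin q, Fin (h s) → Fin p)
    (e : ∀ s : Fin q, Fin (n s) → Fin (h s) → (V → ℤ) → ℤ)
    (g : Fin m → Fin p → (V → ℤ) → Prop)
    (scalarf : (∀ s : Fin q, Fin (n s) → α s) → (Fin m → Prop) → Prop)
    (Pre : ∀ i : ℕ, (Fin p → Fin i → V → ℤ) → Prop)
    (hPre : ∀ (k i : ℕ), k ≤ i → ∀ ρ : Fin k → Fin i, Function.Injective ρ →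
      ∀ v : Fin p → Fin i → V → ℤ, Pre i v → Pre k (fun t j => v t (ρ j)))
    (k : ℕ) (hk : max (m + ∑ s : Fin q, (n s).choose 2) 1 ≤ k) :
    Valid m p q α h n emb e g scalarf Pre k →
      Valid m p q α h n emb e g scalarf Pre (k + 1) := by
  classical
  intro hvalid X v hv
  set M : ∀ s : Fin q, Fin (n s) → Fin (h s) → Fin (k+1) → ℤ :=
    fun s r t j => e s r t (v (emb s t) j) with hMdef
  -- bad column predicates
  let P1 : Fin (k+1) → Prop := fun d =>
    ∃ l : Fin m, (∃ t, ¬ g l t (v t d)) ∧ ∀ t (j : Fin (k+1)), j ≠ d → g l t (v t j)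
  let P2 : Fin (k+1) → Prop := fun d => ∃ x : PairT q n, BadPair n h M d x
  let F1 : Finset (Fin (k+1)) := Finset.univ.filter P1
  let F2 : Finset (Fin (k+1)) := Finset.univ.filter P2
  have hF1 : F1.card ≤ m := by
    rcases Nat.eq_zero_or_pos m with hm | hm
    · subst hm
      have : F1 = ∅ := by
        apply Finset.eq_empty_of_forall_notMem
        intro d hd
        simp only [F1, Finset.mem_filter] at hd
        obtain ⟨l, _⟩ := hd.2
        exact l.elim0
      simp [this]
    · have : Nonempty (Fin m) := ⟨⟨0, hm⟩⟩
      have hcard := Finset.card_le_card_of_injOn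
        (f := fun d => if hd : P1 d then hd.choose else Classical.arbitrary (Fin m))
        (s := F1) (t := Finset.univ)
        (fun d _ => Finset.mem_univ _)
        (by
          intro d hd d' hd' heq
          simp only [F1, Finset.mem_coe, Finset.mem_filter] at hd hd'
          simp only at heq
          rw [dif_pos hd.2, dif_pos hd'.2] at heq
          by_contra hne
          obtain ⟨t, ht⟩ := hd.2.choose_spec.1
          have := hd'.2.choose_spec.2 t d (by exact hne)
          rw [← heq] at this
          exact ht this)
      simpa using hcard
  have hF2 : F2.card ≤ ∑ s : Fin q, (n s).choose 2 := by
    rcases Finset.eq_empty_or_nonempty F2 with hE | ⟨d0, hd0⟩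
    · simp [hE]
    · have hT : Nonempty (PairT q n) := by
        simp only [F2, Finset.mem_filter] at hd0
        exact ⟨hd0.2.choose⟩
      have hcard := Finset.card_le_card_of_injOn
        (f := fun d => if hd : P2 d then hd.choose else Classical.arbitrary (PairT q n))
        (s := F2) (t := Finset.univ)
        (fun d _ => Finset.mem_univ _)
        (by
          intro d hd d' hd' heq
          simp only [F2, Finset.mem_coe, Finset.mem_filter] at hd hd'
          simp only at heq
          rw [dif_pos hd.2, dif_pos hd'.2] at heq
          by_contra hne
          obtain ⟨r, hr, r', hr', hMr⟩ := hd.2.choose_spec.1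
          apply hMr
          funext t j
          rcases eq_or_ne j d with rfl | hj
          · have := hd'.2.choose_spec.2
            rw [← heq] at this
            exact this r hr r' hr' t j (by exact fun hc => hne (hc ▸ rfl))
          · exact hd.2.choose_spec.2 r hr r' hr' t j hj)
      calc F2.card ≤ (Finset.univ : Finset (PairT q n)).card := hcard
        _ = Fintype.card (PairT q n) := rfl
        _ = ∑ s : Fin q, (n s).choose 2 := by
            rw [Fintype.card_sigma]
            congr 1
            funext s
            rw [Fintype.card_finset_len, Fintype.card_fin]
  obtain ⟨d, hd⟩ : ∃ d : Fin (k+1), d ∉ F1 ∪ F2 := by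
    by_contra hcon
    push_neg at hcon
    have hle : (Finset.univ : Finset (Fin (k+1))).card ≤ (F1 ∪ F2).card :=
      Finset.card_le_card (fun x _ => hcon x)
    have := Finset.card_union_le F1 F2
    simp only [Finset.card_univ, Fintype.card_fin] at hle
    omega
  have hd1 : ¬ P1 d := by
    intro hP; exact hd (Finset.mem_union_left _ (Finset.mem_filter.2 ⟨Finset.mem_univ _, hP⟩))
  have hd2 : ¬ P2 d := by
    intro hP; exact hd (Finset.mem_union_right _ (Finset.mem_filter.2 ⟨Finset.mem_univ _, hP⟩))
  let ρ : Fin k → Fin (k+1) := Fin.succAbove d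
  have hρinj : Function.Injective ρ := Fin.succAbove_right_injective
  have hρrange : ∀ j : Fin (k+1), j ≠ d → ∃ i, ρ i = j := fun j hj =>
    Fin.exists_succAbove_eq hj
  -- extension of restricted matrices
  let ext : ∀ s : Fin q, (Fin (h s) → Fin k → ℤ) → (Fin (h s) → Fin (k+1) → ℤ) :=
    fun s f => if hf : ∃ r, (fun t j => M s r t (ρ j)) = f then M s hf.choose
      else fun _ _ => 0
  have hext : ∀ s r, ext s (fun t j => M s r t (ρ j)) = M s r := by
    intro s r
    have hf : ∃ r', (fun t j => M s r' t (ρ j)) = (fun t j => M s r t (ρ j)) := ⟨r, rfl⟩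
    have hval : ext s (fun t j => M s r t (ρ j)) = M s hf.choose := by
      simp only [ext]
      exact dif_pos hf
    rw [hval]
    by_contra hne
    have hrr : hf.choose ≠ r := fun hc => hne (congrArg (M s) hc)
    have hagree : ∀ t (j : Fin (k+1)), j ≠ d → M s hf.choose t j = M s r t j := by
      intro t j hj
      obtain ⟨i, rfl⟩ := hρrange j hj
      exact congrFun (congrFun hf.choose_spec t) i
    apply hd2
    have hall : ∀ a ∈ ({hf.choose, r} : Finset (Fin (n s))),
        ∀ b ∈ ({hf.choose, r} : Finset (Fin (n s))),
        ∀ t (j : Fin (k+1)), j ≠ d → M s a t j = M s b t j := by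
      intro a ha b hb t j hj
      simp only [Finset.mem_insert, Finset.mem_singleton] at ha hb
      rcases ha with rfl | rfl <;> rcases hb with rfl | rfl
      · rfl
      · exact hagree t j hj
      · exact (hagree t j hj).symm
      · rfl
    exact ⟨⟨s, ⟨{hf.choose, r}, Finset.card_pair hrr⟩⟩,
      ⟨hf.choose, Finset.mem_insert_self _ _, r,
        Finset.mem_insert_of_mem (Finset.mem_singleton_self _), hne⟩, hall⟩
  have hv' : Pre k (fun t j => v t (ρ j)) := hPre k (k+1) (by omega) ρ hρinj v hv
  have hmain := hvalid (fun s f => X s (ext s f)) (fun t j => v t (ρ j)) hv'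
  have hA : (fun s r => X s (ext s (fun t j => e s r t (v (emb s t) (ρ j)))))
      = (fun (s : Fin q) (r : Fin (n s)) => X s (fun t j => e s r t (v (emb s t) j))) := by
    funext s r
    exact congrArg (X s) (hext s r)
  have hC : (fun l => ∀ t (j : Fin k), g l t (v t (ρ j)))
      = (fun l => ∀ t (j : Fin (k+1)), g l t (v t j)) := by
    funext l
    apply propext
    constructor
    · intro hl t j
      rcases eq_or_ne j d with rfl | hj
      · by_contra hg
        apply hd1
        refine ⟨l, ⟨t, hg⟩, ?_⟩
        intro t' j' hj'
        obtain ⟨i, rfl⟩ := hρrange j' hj'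
        exact hl t' i
      · obtain ⟨i, rfl⟩ := hρrange j hj
        exact hl t i
    · intro hl t j
      exact hl t _
  rw [hA, hC] at hmain
  exact hmain
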